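/- arXiv:2008.03199 — 9 statements merged into one kernel-verified Lean document; each statement's English description precedes it below -/
import Mathlib

section
/- Let A be a finite-dimensional algebra over a field k and let J be a proper left ideal of A. Then every endomorphism of the left A-module A/J which factors through a projective A-module is zero if and only if the right annihilator r(J) = {a ∈ A | Ja = 0} is contained in J. -/
universe u v

/-- An `A`-linear map factors through a projective `A`-module. -/
def FactorsThroughProjective (A : Type u) [Ring A] {M N : Type v}
    [AddCommGroup M] [Module A M] [AddCommGroup N] [Module A N]
    (f : M →ₗ[A] N) : Prop :=
  ∃ (P : Type v) (_ : AddCommGroup P) (_ : Module A P),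
    Module.Projective A P ∧ ∃ (g : M →ₗ[A] P) (h : P →ₗ[A] N), h.comp g = f

/-- For a finite-dimensional algebra `A` over a field `k` and a proper left
ideal `J` of `A`, every endomorphism of `A/J` factoring through a projective `A`-module is
zero if and only if the right annihilator of `J` is contained in `J`. -/
theorem stmt1 (k : Type u) [Field k] (A : Type u) [Ring A] [Algebra k A]
    [FiniteDimensional k A] (J : Ideal A) (hJ : J ≠ ⊤) :
    (∀ f : (A ⧸ J) →ₗ[A] (A ⧸ J), FactorsThroughProjective A f → f = 0) ↔
      {a : A | ∀ x ∈ J, x * a = 0} ⊆ (J : Set A) := by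
  constructor
  · intro H a ha
    have hker : J ≤ LinearMap.ker (LinearMap.toSpanSingleton A A a) := by
      intro x hx
      simp only [LinearMap.mem_ker, LinearMap.toSpanSingleton_apply, smul_eq_mul]
      exact ha x hx
    set g : (A ⧸ J) →ₗ[A] A := J.liftQ (LinearMap.toSpanSingleton A A a) hker with hg
    have hf := H (J.mkQ.comp g)
      ⟨A, inferInstance, inferInstance, inferInstance, g, J.mkQ, rfl⟩
    have h1 : J.mkQ (g (J.mkQ 1)) = 0 := by
      rw [← LinearMap.comp_apply, hf]; rfl
    have h2 : g (J.mkQ 1) = a := by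
      simp [hg, Submodule.liftQ_apply, LinearMap.toSpanSingleton_apply]
    rw [h2] at h1
    simpa [Submodule.Quotient.mk_eq_zero] using h1
  · rintro hr f ⟨P, _, _, hP, g, h, hfg⟩
    obtain ⟨s, hs⟩ := hP.out
    set u : P →₀ A := s (g (Submodule.Quotient.mk 1)) with hu
    have key : ∀ p : P, ∀ x ∈ J, x * u p = 0 := by
      intro p x hx
      have hx0 : (Submodule.Quotient.mk x : A ⧸ J) = 0 :=
        (Submodule.Quotient.mk_eq_zero J).2 hx
      have : x • u = 0 := by
        have : x • (Submodule.Quotient.mk 1 : A ⧸ J) = 0 := by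
          rw [← Submodule.Quotient.mk_smul, smul_eq_mul, mul_one, hx0]
        rw [hu, ← map_smul, ← map_smul, this, map_zero, map_zero]
      calc x * u p = (x • u) p := by simp [Finsupp.smul_apply, smul_eq_mul]
        _ = 0 := by rw [this]; rfl
    have hone : f (Submodule.Quotient.mk 1) = 0 := by
      have h1 : f (Submodule.Quotient.mk 1) = h (Finsupp.linearCombination A id u) := by
        rw [hu, hs, ← hfg]; rfl
      rw [h1, Finsupp.linearCombination_apply, map_finsuppSum]
      rw [Finsupp.sum]
      apply Finset.sum_eq_zero
      intro p _
      obtain ⟨y, hy⟩ := Submodule.Quotient.mk_surjective J (h p)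
      have : h ((u p) • (id p : P)) = (u p) • h p := by
        rw [map_smul]; rfl
      rw [this, ← hy, ← Submodule.Quotient.mk_smul, smul_eq_mul,
        Submodule.Quotient.mk_eq_zero]
      apply hr
      intro x hx
      show x * (u p * y) = 0
      rw [← mul_assoc, key p x hx, zero_mul]
    apply LinearMap.ext
    intro x
    refine Submodule.Quotient.induction_on _ x fun x => ?_
    have : (Submodule.Quotient.mk x : A ⧸ J) = x • Submodule.Quotient.mk 1 := by
      rw [← Submodule.Quotient.mk_smul, smul_eq_mul, mul_one]
    rw [this, map_smul, hone, smul_zero]; rfl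
end

section
/- Let A be a finite-dimensional algebra over a field k, let Y be a finitely generated A-module such that every endomorphism of Y factoring through a projective A-module is zero. If U is a quotient of Y^m and V is a quotient of Y^n for some positive integers m, n, then every A-homomorphism from U to V which factors through a projective A-module is zero. -/
universe u v

/-- Let `A` be a finite-dimensional algebra over a field `k`, `Y` a finitely
generated `A`-module with `End^pr_A(Y) = 0`. If `U` is a quotient of `Y^m` and `V` is a
quotient of `Y^n` (`m, n > 0`), then every `A`-homomorphism `U → V` which factors through a
projective `A`-module is zero. -/
theorem stmt2 (k : Type u) [Field k] (A : Type u) [Ring A] [Algebra k A]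
    [FiniteDimensional k A]
    (Y : Type v) [AddCommGroup Y] [Module A Y] [Module.Finite A Y]
    (hY : ∀ f : Y →ₗ[A] Y, FactorsThroughProjective A f → f = 0)
    (m n : ℕ) (hm : 0 < m) (hn : 0 < n)
    (U : Type v) [AddCommGroup U] [Module A U] [Module.Finite A U]
    (V : Type v) [AddCommGroup V] [Module A V] [Module.Finite A V]
    (πU : (Fin m → Y) →ₗ[A] U) (hπU : Function.Surjective πU)
    (πV : (Fin n → Y) →ₗ[A] V) (hπV : Function.Surjective πV) :
    ∀ f : U →ₗ[A] V, FactorsThroughProjective A f → f = 0 := by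
  rintro f ⟨P, _, _, hP, g, h, hgh⟩
  -- lift h : P →ₗ V through πV
  obtain ⟨h', hh'⟩ := Module.projective_lifting_property πV h hπV
  set g' : (Fin m → Y) →ₗ[A] P := g.comp πU with hg'
  -- each component Y → Y of h' ∘ g' is zero
  have hcomp : ∀ (i : Fin m) (j : Fin n),
      ((LinearMap.proj j).comp h').comp (g'.comp (LinearMap.single A (fun _ => Y) i)) = 0 := by
    intro i j
    exact hY _ ⟨P, ‹_›, ‹_›, hP, g'.comp (LinearMap.single A (fun _ => Y) i),
      (LinearMap.proj j).comp h', by ext y; rfl⟩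
  have key : ∀ x : Fin m → Y, h' (g' x) = 0 := by
    intro x
    have hx : x = ∑ i : Fin m, Pi.single i (x i) := (Finset.univ_sum_single x).symm
    funext j
    rw [hx]
    simp only [map_sum]
    rw [Finset.sum_apply]
    have : ∀ i : Fin m, h' (g' (Pi.single i (x i))) j = 0 := by
      intro i
      have := congrArg (fun t => t (x i)) (hcomp i j)
      simpa using this
    simp [this]
  ext u
  obtain ⟨x, rfl⟩ := hπU u
  have : f (πU x) = πV (h' (g' x)) := by
    rw [← hgh, ← hh']
    rfl
  rw [this, key x, map_zero]
  rfl
end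

section
/- Let A be a finite-dimensional algebra over a field k and I a proper ideal of A with r(I) ⊆ I. Then for any two finitely generated A/I-modules U, V (regarded as A-modules via the quotient map A → A/I), every A-homomorphism U → V factoring through a projective A-module is zero. -/
universe u v

/-- Let `A` be a finite-dimensional algebra over a field `k` and `I` a proper
two-sided ideal with `r(I) ⊆ I`. Then for any two finitely generated `A/I`-modules `U`, `V`
(i.e. `A`-modules annihilated by `I`), every `A`-homomorphism `U → V` factoring through a
projective `A`-module is zero. -/
theorem stmt3 (k : Type u) [Field k] (A : Type u) [Ring A] [Algebra k A]
    [FiniteDimensional k A]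
    (I : Ideal A) (hItwoSided : ∀ a ∈ I, ∀ b : A, a * b ∈ I) (hIproper : I ≠ ⊤)
    (hann : {a : A | ∀ x ∈ I, x * a = 0} ⊆ (I : Set A))
    (U : Type v) [AddCommGroup U] [Module A U] [Module.Finite A U]
    (hU : ∀ a ∈ I, ∀ u : U, a • u = 0)
    (V : Type v) [AddCommGroup V] [Module A V] [Module.Finite A V]
    (hV : ∀ a ∈ I, ∀ v : V, a • v = 0) :
    ∀ f : U →ₗ[A] V, FactorsThroughProjective A f → f = 0 := by
  rintro f ⟨P, _, _, hP, g, h, rfl⟩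
  ext u
  obtain ⟨s, hs⟩ := hP.out
  have key : ∀ x ∈ I, x • g u = 0 := fun x hx => by
    rw [← map_smul, hU x hx, map_zero]
  have hcoef : ∀ p : P, (s (g u)) p ∈ I := by
    intro p
    apply hann
    intro x hx
    have : s (x • g u) = 0 := by rw [key x hx, map_zero]
    have h2 : (x • s (g u)) p = 0 := by rw [← map_smul, this]; rfl
    simpa [Finsupp.smul_apply, smul_eq_mul] using h2
  have : h (g u) = 0 := by
    have htot := hs (g u)
    rw [← htot, Finsupp.linearCombination_apply, Finsupp.sum, map_sum]
    apply Finset.sum_eq_zero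
    intro p hp
    rw [map_smul]
    exact hV _ (hcoef p) _
  simpa using this
end

section
/- Let D be a finite-dimensional algebra over a field k and A a unital subalgebra of D. Suppose the restriction functor Res^D_A : mod(D) → mod(A) is fully faithful and sends every simple D-module to a simple A-module. Then A = D. -/
/-!
Every `A`-stable additive subgroup `S` of a finite-dimensional `D`-module `M` is a
`D`-submodule; for `S = A ⊆ D` this gives `D = D • 1 ⊆ A`. Induct on `dim M`: pick a simple
submodule `N`, so that the image of `S` in `M ⧸ N` is a `D`-submodule `T` by induction.
As `N` stays simple over `A`, either `N ⊆ S`, and then `S` is the preimage of `T`, or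
`S ∩ N = 0`, and then `S → T` is bijective; its inverse `T → M` is `A`-linear, hence
`D`-linear by fullness, and `S` is its image.
-/

universe u

open Module Submodule

section

variable {R M : Type*} [Ring R] [AddCommGroup M] [Module R M]

theorem AddSubgroup.eq_toAddSubgroup_comap_mkQ {N : Submodule R M} {S : AddSubgroup M}
    {T : Submodule R (M ⧸ N)} (hNS : N.toAddSubgroup ≤ S)
    (hT : S.map N.mkQ.toAddMonoidHom = T.toAddSubgroup) :
    S = (T.comap N.mkQ).toAddSubgroup := by
  have h := S.comap_map_eq N.mkQ.toAddMonoidHom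
  rw [hT, show N.mkQ.toAddMonoidHom.ker = N.toAddSubgroup from
    congrArg Submodule.toAddSubgroup N.ker_mkQ, sup_eq_left.2 hNS] at h
  exact h.symm

theorem Submodule.finrank_quotient_lt (k : Type*) [Field k] [Module k M] [SMul k R]
    [IsScalarTower k R M] [FiniteDimensional k M] {N : Submodule R M} (hN : N ≠ ⊥) :
    finrank k (M ⧸ N) < finrank k M := by
  have : Nontrivial N := nontrivial_iff_ne_bot.2 hN
  have : Module.Finite k N := inferInstanceAs (Module.Finite k (N.restrictScalars k))
  have hpos : 0 < finrank k N := finrank_pos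
  have hle : finrank k N ≤ finrank k M := (N.restrictScalars k).finrank_le
  rw [N.finrank_quotient]
  omega

end

variable {k D : Type u} [Field k] [Ring D] [Algebra k D]

def RestrictionIsFull (A : Subalgebra k D) : Prop :=
  ∀ (M N : ModuleCat.{u} D), Module.Finite D M → Module.Finite D N →
    ∀ g : M →+ N, (∀ (a : A) (m : M), g ((a : D) • m) = (a : D) • g m) →
      ∃ f : M →ₗ[D] N, ∀ m : M, f m = g m

def RestrictionPreservesSimple (A : Subalgebra k D) : Prop :=
  ∀ M : ModuleCat.{u} D, IsSimpleModule D M → ∀ S : AddSubgroup M,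
    (∀ (a : A), ∀ m ∈ S, (a : D) • m ∈ S) → S = ⊥ ∨ S = ⊤

theorem RestrictionIsFull.exists_toAddSubgroup_eq_of_disjoint {A : Subalgebra k D}
    (hfull : RestrictionIsFull A) {M : Type u} [AddCommGroup M] [Module D M] [IsNoetherian D M]
    {N : Submodule D M} {S : AddSubgroup M} {T : Submodule D (M ⧸ N)}
    (hS : ∀ a : A, ∀ m ∈ S, (a : D) • m ∈ S)
    (hSN : Disjoint S N.toAddSubgroup) (hT : S.map N.mkQ.toAddMonoidHom = T.toAddSubgroup) :
    ∃ P : Submodule D M, P.toAddSubgroup = S := by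
  let π : S →+ T := (N.mkQ.toAddMonoidHom.comp S.subtype).codRestrict T fun s =>
    (SetLike.ext_iff.1 hT _).1 (AddSubgroup.mem_map_of_mem _ s.2)
  have hπ : Function.Bijective π := by
    refine ⟨(injective_iff_map_eq_zero π).2 fun s hs => ?_, fun t => ?_⟩
    · have hsN : (s : M) ∈ N := (Submodule.Quotient.mk_eq_zero N).1 (congrArg Subtype.val hs)
      exact Subtype.ext (AddSubgroup.disjoint_def.1 hSN s.2 hsN)
    · obtain ⟨m, hm, hmt⟩ := (SetLike.ext_iff.1 hT _).2 t.2
      exact ⟨⟨m, hm⟩, Subtype.ext hmt⟩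
  let e := AddEquiv.ofBijective π hπ
  let σ : T →+ M := S.subtype.comp e.symm.toAddMonoidHom
  have hσ : ∀ (a : A) (t : T), σ ((a : D) • t) = (a : D) • σ t := fun a t => by
    have : e.symm ((a : D) • t) = ⟨(a : D) • σ t, hS a _ (e.symm t).2⟩ :=
      e.symm_apply_eq.2 <| Subtype.ext <| by
        change (a : D) • (t : M ⧸ N) = N.mkQ ((a : D) • σ t)
        rw [map_smul]
        exact congrArg _ (congrArg Subtype.val (e.apply_symm_apply t)).symm
    exact congrArg Subtype.val this
  obtain ⟨f, hf⟩ := hfull (.of D T) (.of D M) inferInstance inferInstance σ hσ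
  refine ⟨LinearMap.range f, AddSubgroup.ext fun m => ⟨?_, fun hm => ?_⟩⟩
  · rintro ⟨t, rfl⟩
    exact hf t ▸ (e.symm t).2
  · exact ⟨e ⟨m, hm⟩, (hf _).trans (by simp [σ])⟩

theorem exists_toAddSubgroup_eq_of_subalgebra_smul_mem {A : Subalgebra k D}
    (hfull : RestrictionIsFull A) (hsimple : RestrictionPreservesSimple A) {M : Type u}
    [AddCommGroup M] [Module D M] [Module k M] [IsScalarTower k D M] [FiniteDimensional k M]
    (S : AddSubgroup M) (hS : ∀ a : A, ∀ m ∈ S, (a : D) • m ∈ S) :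
    ∃ P : Submodule D M, P.toAddSubgroup = S := by
  induction hn : finrank k M using Nat.strong_induction_on generalizing M with
  | _ n ih =>
  have : IsArtinian D M := isArtinian_of_tower k inferInstance
  have : IsNoetherian D M := isNoetherian_of_tower k inferInstance
  rcases subsingleton_or_nontrivial M with hM | hM
  · exact ⟨⊥, Subsingleton.elim _ _⟩
  obtain ⟨N, hN⟩ := IsAtomic.exists_atom (Submodule D M)
  have : IsSimpleModule D N := isSimpleModule_iff_isAtom.2 hN
  obtain ⟨T, hT⟩ := ih _ (hn ▸ N.finrank_quotient_lt k hN.1) (S.map N.mkQ.toAddMonoidHom)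
    (by rintro a _ ⟨m, hm, rfl⟩; exact ⟨_, hS a m hm, map_smul N.mkQ _ m⟩) rfl
  rcases hsimple (.of D N) this (S.comap N.subtype.toAddMonoidHom)
    (fun a m hm => hS a _ hm) with hSN | hNS
  · refine hfull.exists_toAddSubgroup_eq_of_disjoint hS
      (AddSubgroup.disjoint_def.2 fun {m} hmS hmN => ?_) hT.symm
    have : (⟨m, hmN⟩ : N) ∈ S.comap N.subtype.toAddMonoidHom := hmS
    rw [hSN, AddSubgroup.mem_bot] at this
    exact congrArg Subtype.val this
  · refine ⟨_, (AddSubgroup.eq_toAddSubgroup_comap_mkQ (fun m hm => ?_) hT.symm).symm⟩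
    have : (⟨m, hm⟩ : N) ∈ S.comap N.subtype.toAddMonoidHom := hNS ▸ AddSubgroup.mem_top _
    exact this

/-- Let `D` be a finite-dimensional algebra over a field `k` and `A` a unital
subalgebra of `D`. If the restriction functor from finitely generated `D`-modules to
`A`-modules is fully faithful (every `A`-equivariant additive map between finitely
generated `D`-modules is the restriction of a unique `D`-linear map) and sends every simple
`D`-module to a simple `A`-module, then `A = D`. -/
theorem stmt5 (k : Type u) [Field k] (D : Type u) [Ring D] [Algebra k D]
    [FiniteDimensional k D] (A : Subalgebra k D)
    (hff : ∀ (M N : ModuleCat.{u} D), Module.Finite D M → Module.Finite D N →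
      ∀ g : (M : Type u) →+ (N : Type u),
        (∀ (a : A) (m : M), g ((a : D) • m) = (a : D) • g m) →
          ∃! f : (M : Type u) →ₗ[D] (N : Type u), ∀ m : M, f m = g m)
    (hsimple : ∀ M : ModuleCat.{u} D, IsSimpleModule D M →
      (Nontrivial M ∧ ∀ S : AddSubgroup (M : Type u),
        (∀ (a : A), ∀ m ∈ S, (a : D) • m ∈ S) → S = ⊥ ∨ S = ⊤)) :
    A = ⊤ := by
  obtain ⟨P, hP⟩ := exists_toAddSubgroup_eq_of_subalgebra_smul_mem
    (fun M N hM hN g hg => (hff M N hM hN g hg).exists) (fun M hM => (hsimple M hM).2)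
    (Subalgebra.toSubmodule A).toAddSubgroup fun a m hm => A.mul_mem a.2 hm
  have hP_top : P = ⊤ :=
    (Ideal.eq_top_iff_one P).2 (show (1 : D) ∈ P.toAddSubgroup from hP ▸ A.one_mem)
  refine eq_top_iff.2 fun d _ => show d ∈ (Subalgebra.toSubmodule A).toAddSubgroup from ?_
  rw [← hP, hP_top]
  exact Submodule.mem_top (R := D)
end

section
/- Let A be a finite-dimensional symmetric algebra over a field k and let z ∈ Z(A) be a central element with annihilator I = ann(z) a proper ideal. Then every endomorphism of the left A-module A/I factoring through a projective A-module is zero if and only if z² = 0. -/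
universe u v

/-- Let `A` be a finite-dimensional symmetric algebra over a field `k`
(i.e. `A ≅ A^∨ = Hom_k(A,k)` as `(A,A)`-bimodules, encoded by a `k`-linear equivalence `e`
with `e (a*x*b) c = e x (b*c*a)`), let `z` be a central element of `A` whose annihilator
`I = ann(z)` is a proper ideal. Then every endomorphism of the left `A`-module `A/I`
factoring through a projective `A`-module is zero if and only if `z² = 0`. -/
theorem stmt15 (k : Type u) [Field k] (A : Type u) [Ring A] [Algebra k A]
    [FiniteDimensional k A]
    (hsym : ∃ e : A ≃ₗ[k] (A →ₗ[k] k), ∀ a x b c : A, e (a * x * b) c = e x (b * c * a))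
    (z : A) (hz : ∀ a : A, a * z = z * a)
    (hproper : LinearMap.ker (LinearMap.toSpanSingleton A A z) ≠ ⊤) :
    (∀ f : (A ⧸ LinearMap.ker (LinearMap.toSpanSingleton A A z)) →ₗ[A]
        (A ⧸ LinearMap.ker (LinearMap.toSpanSingleton A A z)),
      FactorsThroughProjective A f → f = 0) ↔ z * z = 0 := by
  classical
  set I := LinearMap.ker (LinearMap.toSpanSingleton A A z) with hI
  have hIm : ∀ x : A, x ∈ I ↔ x * z = 0 := by
    intro x
    simp [hI, LinearMap.mem_ker, LinearMap.toSpanSingleton_apply, smul_eq_mul]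
  constructor
  · -- easy direction: multiplication by z factors through A
    intro H
    set g : (A ⧸ I) →ₗ[A] A := Submodule.liftQ I (LinearMap.toSpanSingleton A A z) le_rfl with hg
    have hfact : FactorsThroughProjective A ((I.mkQ).comp g) :=
      ⟨A, inferInstance, inferInstance, inferInstance, g, I.mkQ, rfl⟩
    have h0 := H _ hfact
    have h1 := LinearMap.congr_fun h0 (Submodule.Quotient.mk (1 : A))
    have h2 : Submodule.Quotient.mk (p := I) z = 0 := by
      simpa [hg, LinearMap.toSpanSingleton_apply, smul_eq_mul] using h1
    have h3 : z ∈ I := (Submodule.Quotient.mk_eq_zero I).mp h2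
    exact (hIm z).mp h3
  · rintro hzz f ⟨P, _, _, hP, g, h, hgh⟩
    obtain ⟨e, he⟩ := hsym
    set lam : A →ₗ[k] k := e 1 with hlam
    have hxc : ∀ x c : A, e x c = lam (c * x) := by
      intro x c
      have := he x 1 1 c
      simpa [hlam] using this
    have hcomm : ∀ x y : A, lam (x * y) = lam (y * x) := by
      intro x y
      have h1 := he x 1 1 y
      have h2 := he 1 1 x y
      simp only [mul_one, one_mul] at h1 h2
      rw [← h1, ← h2]
    have hnd : ∀ y : A, (∀ c : A, lam (c * y) = 0) → y = 0 := by
      intro y hy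
      have hey : e y = 0 := by
        ext c
        simpa [hxc] using hy c
      have := e.injective (by rw [hey, map_zero] : e y = e 0)
      simpa using this
    -- key lemma: right annihilator of I is contained in A·z
    have key : ∀ b : A, (∀ x : A, x * z = 0 → x * b = 0) → ∃ t : A, t * z = b := by
      intro b hb
      set S : Submodule k A :=
        (LinearMap.range (LinearMap.toSpanSingleton A A z)).restrictScalars k with hS
      have hbS : b ∈ S := by
        have hmk : Submodule.Quotient.mk (p := S) b = 0 := by
          rw [← Module.forall_dual_apply_eq_zero_iff k]
          intro φ
          set ψ : A →ₗ[k] k := φ.comp S.mkQ with hψ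
          set x0 := e.symm ψ with hx0
          have hex0 : e x0 = ψ := e.apply_symm_apply ψ
          have hzx0 : z * x0 = 0 := by
            apply hnd
            intro c
            have hmem : c * z ∈ S := by
              refine (Submodule.restrictScalars_mem k _ _).mpr ⟨c, ?_⟩
              simp [LinearMap.toSpanSingleton_apply, smul_eq_mul]
            have hψ0 : ψ (c * z) = 0 := by
              have : S.mkQ (c * z) = 0 := (Submodule.Quotient.mk_eq_zero S).mpr hmem
              simp [hψ, this]
            calc lam (c * (z * x0)) = lam ((c * z) * x0) := by rw [mul_assoc]
              _ = e x0 (c * z) := (hxc x0 (c * z)).symm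
              _ = ψ (c * z) := by rw [hex0]
              _ = 0 := hψ0
          have hx0z : x0 * z = 0 := by rw [hz x0, hzx0]
          have hx0b : x0 * b = 0 := hb x0 hx0z
          have : φ (Submodule.Quotient.mk b) = ψ b := by simp [hψ]
          rw [this, ← hex0, hxc, hcomm, hx0b, map_zero]
        exact (Submodule.Quotient.mk_eq_zero S).mp hmk
      obtain ⟨t, ht⟩ := (Submodule.restrictScalars_mem k _ _).mp hbS
      exact ⟨t, by simpa [LinearMap.toSpanSingleton_apply, smul_eq_mul] using ht⟩
    -- now the main argument
    set p : P := g (Submodule.Quotient.mk (1 : A)) with hp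
    have hIp : ∀ x : A, x * z = 0 → x • p = 0 := by
      intro x hx
      have hmkx : Submodule.Quotient.mk (p := I) x = 0 :=
        (Submodule.Quotient.mk_eq_zero I).mpr ((hIm x).mpr hx)
      calc x • p = g (x • Submodule.Quotient.mk (1 : A)) := by rw [map_smul]
        _ = g (Submodule.Quotient.mk (x • (1 : A))) := by rw [Submodule.Quotient.mk_smul]
        _ = g 0 := by rw [smul_eq_mul, mul_one, hmkx]
        _ = 0 := map_zero g
    obtain ⟨s, hs⟩ := hP.out
    set σ : P →₀ A := s p with hσ
    have hσann : ∀ q : P, ∀ x : A, x * z = 0 → x * σ q = 0 := by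
      intro q x hx
      have : s (x • p) = 0 := by rw [hIp x hx, map_zero]
      have hxs : x • σ = 0 := by rw [hσ, ← map_smul, this]
      have := DFunLike.congr_fun hxs q
      simpa [smul_eq_mul] using this
    have hf1 : f (Submodule.Quotient.mk (1 : A)) = 0 := by
      have hfp : f (Submodule.Quotient.mk (1 : A)) = h p := by
        rw [← hgh]; rfl
      have hps : p = Finsupp.linearCombination A id σ := (hs p).symm
      rw [hfp, hps, Finsupp.linearCombination_apply, map_finsuppSum]
      rw [Finsupp.sum]
      apply Finset.sum_eq_zero
      intro q _
      obtain ⟨t, ht⟩ := key (σ q) (hσann q)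
      obtain ⟨c, hc⟩ := Submodule.Quotient.mk_surjective I (h (id q))
      have hterm : (t * z * c) * z = 0 := by
        have hzcz : z * (c * z) = 0 := by rw [hz c, ← mul_assoc, hzz, zero_mul]
        calc (t * z * c) * z = t * (z * (c * z)) := by simp only [mul_assoc]
          _ = 0 := by rw [hzcz, mul_zero]
      have hmem : t * z * c ∈ I := (hIm _).mpr hterm
      calc h (σ q • id q) = σ q • Submodule.Quotient.mk c := by rw [map_smul, hc]
        _ = Submodule.Quotient.mk (σ q • c) := (Submodule.Quotient.mk_smul I _ _).symm
        _ = Submodule.Quotient.mk (t * z * c) := by rw [smul_eq_mul, ← ht]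
        _ = 0 := (Submodule.Quotient.mk_eq_zero I).mpr hmem
    refine LinearMap.ext fun x => ?_
    obtain ⟨a, ha⟩ := Submodule.Quotient.mk_surjective I x
    calc f x = f (a • Submodule.Quotient.mk (1 : A)) := by
          rw [← ha, ← Submodule.Quotient.mk_smul, smul_eq_mul, mul_one]
      _ = a • f (Submodule.Quotient.mk (1 : A)) := map_smul f a _
      _ = 0 := by rw [hf1, smul_zero]
end

section
/- Let A be a finite-dimensional algebra over a field k such that Ext¹_A(A/I, A/I) = 0, where I is a nonzero proper ideal with A/I selfinjective. Then Ext¹_A(U, A/I) = 0 for every finitely generated A/I-module U (regarded as an A-module). -/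
/-!
Comparing two projective presentations (Schanuel's trick), `Ext¹(X, Y) = 0` holds iff for one, or
equivalently every, projective presentation `0 → K → P → X → 0` every map `K → Y` extends to `P`.

Present `U` as a quotient of `Aⁿ` with kernel `K`; since `I` kills `U`, `Iⁿ ⊆ K`. For `A/I` the
criterion says that every map `I → A/I` extends to `A`, so a given `h : K → A/I` agrees on `Iⁿ`
with some `g₀ : Aⁿ → A/I`. Then `h - g₀` vanishes on `Iⁿ` and descends to the `B`-submodule
`K/Iⁿ ⊆ Aⁿ/Iⁿ = Bⁿ`, where it extends because `B ≅ A/I` is selfinjective.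
-/

universe u

open CategoryTheory Function LinearMap

section Extension

variable {A : Type*} [Ring A]

theorem LinearMap.exists_factor_of_surjectiveₛₗ {B M M' N : Type*} [Ring B]
    {π : A →+* B} [AddCommGroup M] [Module A M] [AddCommGroup M'] [Module B M']
    [AddCommGroup N] [Module A N] [Module B N] (hπ : Surjective π)
    (hN : ∀ (a : A) (x : N), a • x = π a • x) {e : M →ₛₗ[π] M'} (he : Surjective e)
    {f : M →ₗ[A] N} (hef : ker e ≤ ker f) :
    ∃ f' : M' →ₗ[B] N, ∀ x, f' (e x) = f x := by
  have key (x : M) : f (surjInv he (e x)) = f x := by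
    rw [← sub_eq_zero, ← map_sub]
    exact mem_ker.1 (hef (mem_ker.2 (by rw [map_sub, surjInv_eq he, sub_self])))
  refine ⟨{ toFun := fun m => f (surjInv he m), map_add' := ?_, map_smul' := ?_ }, key⟩
  · intro m m'
    obtain ⟨x, rfl⟩ := he m
    obtain ⟨x', rfl⟩ := he m'
    simp only [← map_add, key]
  · intro b m
    obtain ⟨a, rfl⟩ := hπ b
    obtain ⟨x, rfl⟩ := he m
    simp only [← map_smulₛₗ, key, map_smul, hN, RingHom.id_apply]

theorem LinearMap.exists_factor_of_surjective {M N Y : Type*}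
    [AddCommGroup M] [Module A M] [AddCommGroup N] [Module A N] [AddCommGroup Y] [Module A Y]
    {e : M →ₗ[A] N} (he : Surjective e) {f : M →ₗ[A] Y} (hef : ker e ≤ ker f) :
    ∃ f' : N →ₗ[A] Y, ∀ x, f' (e x) = f x :=
  exists_factor_of_surjectiveₛₗ (π := RingHom.id A) surjective_id (fun _ _ => rfl) he hef

variable {X Y : Type*} [AddCommGroup X] [Module A X] [AddCommGroup Y] [Module A Y]

theorem surjective_comp_subtype_ker_iff_of_exact {P₂ P₁ P₀ : Type*}
    [AddCommGroup P₂] [Module A P₂] [AddCommGroup P₁] [Module A P₁] [AddCommGroup P₀] [Module A P₀]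
    {d₂ : P₂ →ₗ[A] P₁} {d₁ : P₁ →ₗ[A] P₀} {p : P₀ →ₗ[A] X}
    (h₂₁ : range d₂ = ker d₁) (h₁₀ : range d₁ = ker p) :
    (∀ f : P₁ →ₗ[A] Y, f ∘ₗ d₂ = 0 → ∃ g : P₀ →ₗ[A] Y, g ∘ₗ d₁ = f) ↔
      Surjective fun g : P₀ →ₗ[A] Y => g ∘ₗ (ker p).subtype := by
  let e : P₁ →ₗ[A] ker p := d₁.codRestrict _ fun x => h₁₀ ▸ mem_range_self d₁ x
  have he : Surjective e := by
    rintro ⟨y, hy⟩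
    obtain ⟨x, rfl⟩ := (h₁₀ ▸ hy : y ∈ range d₁)
    exact ⟨x, rfl⟩
  constructor
  · intro H h
    obtain ⟨g, hg⟩ := H (h ∘ₗ e) <| by
      ext z
      have : e (d₂ z) = 0 := Subtype.ext (mem_ker.mp (h₂₁ ▸ mem_range_self d₂ z))
      simp [this]
    refine ⟨g, LinearMap.ext fun y => ?_⟩
    obtain ⟨x, rfl⟩ := he y
    exact LinearMap.congr_fun hg x
  · intro H f hf
    obtain ⟨h, hh⟩ := exists_factor_of_surjective he (f := f) fun x hx => by
      obtain ⟨z, rfl⟩ : x ∈ range d₂ := h₂₁ ▸ congrArg Subtype.val hx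
      exact LinearMap.congr_fun hf z
    obtain ⟨g, rfl⟩ := H h
    exact ⟨g, LinearMap.ext hh⟩

theorem surjective_comp_subtype_ker_of_projective {P Q : Type*}
    [AddCommGroup P] [Module A P] [Module.Projective A P]
    [AddCommGroup Q] [Module A Q] [Module.Projective A Q]
    {p : P →ₗ[A] X} {q : Q →ₗ[A] X} (hp : Surjective p) (hq : Surjective q)
    (H : Surjective fun g : P →ₗ[A] Y => g ∘ₗ (ker p).subtype) :
    Surjective fun g : Q →ₗ[A] Y => g ∘ₗ (ker q).subtype := by
  intro h
  obtain ⟨α, hα⟩ := Module.projective_lifting_property p q hp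
  obtain ⟨β, hβ⟩ := Module.projective_lifting_property q p hq
  have hqβ (x : P) : q (β x) = p x := LinearMap.congr_fun hβ x
  have hpα (x : Q) : p (α x) = q x := LinearMap.congr_fun hα x
  have hβker : ∀ x ∈ ker p, β x ∈ ker q := fun x hx => by simpa [hqβ] using hx
  have hβα (x : Q) : β (α x) - x ∈ ker q := by simp [hqβ, hpα]
  obtain ⟨H₁, hH₁⟩ := H (h ∘ₗ β.restrict hβker)
  -- on `ker q`, the correction term `β ∘ α - id` turns `H₁ ∘ α = h ∘ β ∘ α` into `h`
  refine ⟨H₁ ∘ₗ α - h ∘ₗ (β ∘ₗ α - LinearMap.id).codRestrict _ hβα,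
    LinearMap.ext fun ⟨x, hx⟩ => ?_⟩
  have hαx : α x ∈ ker p := by simpa [hpα] using hx
  have := LinearMap.congr_fun hH₁ ⟨α x, hαx⟩
  simp only [LinearMap.comp_apply, Submodule.coe_subtype, restrict_apply] at this
  simp only [LinearMap.sub_apply, LinearMap.comp_apply, Submodule.coe_subtype, this, ← map_sub]
  congr 1
  ext
  simp

theorem surjective_comp_subtype_pi {ι : Type*} [Fintype ι] [DecidableEq ι] {J : Submodule A A}
    (hJ : Surjective fun g : A →ₗ[A] Y => g ∘ₗ J.subtype) :
    Surjective fun g : (ι → A) →ₗ[A] Y => g ∘ₗ (Submodule.pi Set.univ fun _ => J).subtype := by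
  intro h
  let σ (i : ι) : J →ₗ[A] Submodule.pi Set.univ fun _ => J :=
    (LinearMap.single A (fun _ => A) i ∘ₗ J.subtype).codRestrict _ fun c j _ => by
      rcases eq_or_ne j i with rfl | hne
      · simp
      · simp [Pi.single_eq_of_ne hne]
  choose g hg using fun i => hJ (h ∘ₗ σ i)
  refine ⟨∑ i, g i ∘ₗ LinearMap.proj i, ?_⟩
  ext ⟨v, hv⟩
  have hv' : (⟨v, hv⟩ : Submodule.pi Set.univ fun _ => J) = ∑ i, σ i ⟨v i, hv i trivial⟩ := by
    ext1
    rw [Submodule.coe_sum]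
    exact (Finset.univ_sum_single v).symm
  calc (∑ i, g i ∘ₗ LinearMap.proj i) v = ∑ i, g i (v i) := by simp
    _ = ∑ i, h (σ i ⟨v i, hv i trivial⟩) :=
      Finset.sum_congr rfl fun i _ => LinearMap.congr_fun (hg i) ⟨v i, hv i trivial⟩
    _ = h ⟨v, hv⟩ := by rw [hv', map_sum]

theorem Submodule.pi_le_ker_of_forall_smul_eq_zero {ι : Type*} [Fintype ι] {J : Submodule A A}
    (hX : ∀ a ∈ J, ∀ x : X, a • x = 0) (p : (ι → A) →ₗ[A] X) :
    Submodule.pi Set.univ (fun _ => J) ≤ ker p := by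
  classical
  intro v hv
  rw [mem_ker, pi_eq_sum_univ v, map_sum]
  exact Finset.sum_eq_zero fun i _ => by rw [map_smul, hX _ (hv i trivial)]

end Extension

section QuotientRing

variable {A : Type*} {B N : Type u} [Ring A] [Ring B] {π : A →+* B}
  [AddCommGroup N] [Module A N] [Module B N]

def RingHom.compLeftₛₗ (π : A →+* B) (ι : Type*) : (ι → A) →ₛₗ[π] (ι → B) where
  toFun v i := π (v i)
  map_add' v w := by ext; simp
  map_smul' a v := by ext; simp

theorem exists_comp_subtype_eq_of_forall_map_eq_zero [Module.Injective B N] (hπ : Surjective π)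
    (hN : ∀ (a : A) (x : N), a • x = π a • x) {n : ℕ} (K : Submodule A (Fin n → A))
    (h : K →ₗ[A] N) (hh : ∀ v : K, (∀ i, π (v.1 i) = 0) → h v = 0) :
    ∃ g : (Fin n → A) →ₗ[A] N, g ∘ₗ K.subtype = h := by
  have : RingHomSurjective π := ⟨hπ⟩
  let q := π.compLeftₛₗ (Fin n)
  let e : K →ₛₗ[π] K.map q := q.restrict fun v hv => Submodule.mem_map_of_mem hv
  have he : Surjective e := by
    rintro ⟨_, v, hv, rfl⟩
    exact ⟨⟨v, hv⟩, rfl⟩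
  obtain ⟨h', hh'⟩ := exists_factor_of_surjectiveₛₗ hπ hN he fun v hv =>
    hh v fun i => congrFun (congrArg Subtype.val hv) i
  obtain ⟨G, hG⟩ := Module.Injective.out _ (K.map q).injective_subtype h'
  refine ⟨{ toFun := fun v => G (q v), map_add' := by simp, map_smul' := by simp [hN] }, ?_⟩
  ext v
  exact (hG (e v)).trans (hh' v)

end QuotientRing

section ExtOne

variable {A : Type u} [Ring A] (k : Type*) [Field k] [Algebra k A]

open ProjectiveResolution in
theorem ext_one_subsingleton_iff_ofComplex (X Y : ModuleCat.{u} A) :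
    Subsingleton (((Ext k (ModuleCat.{u} A) 1).obj (.op X)).obj Y) ↔
      ∀ f : (ofComplex X).X 1 →ₗ[A] Y, f ∘ₗ ((ofComplex X).d 2 1).hom = 0 →
        ∃ g : (ofComplex X).X 0 →ₗ[A] Y, g ∘ₗ ((ofComplex X).d 1 0).hom = f := by
  have e := (of X).isoExt (R := k) 1 Y
  rw [of_def] at e
  rw [← ModuleCat.isZero_iff_subsingleton, e.isZero_iff,
    ← HomologicalComplex.exactAt_iff_isZero_homology,
    HomologicalComplex.exactAt_iff' _ 0 1 2 (by simp) (by simp), ShortComplex.moduleCat_exact_iff]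
  refine (show _ ↔ ∀ f : (ofComplex X).X 1 ⟶ Y, (ofComplex X).d 2 1 ≫ f = 0 →
      ∃ g, (ofComplex X).d 1 0 ≫ g = f from Iff.rfl).trans ⟨fun H f hf => ?_, fun H f hf => ?_⟩
  · obtain ⟨g, hg⟩ := H (ModuleCat.ofHom f) (ModuleCat.hom_ext hf)
    exact ⟨g.hom, congrArg ModuleCat.Hom.hom hg⟩
  · obtain ⟨g, hg⟩ := H f.hom (congrArg ModuleCat.Hom.hom hf)
    exact ⟨ModuleCat.ofHom g, ModuleCat.hom_ext hg⟩

open ProjectiveResolution in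
theorem ext_one_subsingleton_iff_surjective {X Y : ModuleCat.{u} A} {P : Type u}
    [AddCommGroup P] [Module A P] [Module.Projective A P] {p : P →ₗ[A] X} (hp : Surjective p) :
    Subsingleton (((Ext k (ModuleCat.{u} A) 1).obj (.op X)).obj Y) ↔
      Surjective fun g : P →ₗ[A] Y => g ∘ₗ (ker p).subtype := by
  have h₂₁ : range ((ofComplex X).d 2 1).hom = ker ((ofComplex X).d 1 0).hom :=
    ((HomologicalComplex.exactAt_iff' _ 2 1 0 (by simp) (by simp)).1
      (ofComplex_exactAt_succ X 0)).moduleCat_range_eq_ker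
  have h₁₀ : range ((ofComplex X).d 1 0).hom = ker (Projective.π X).hom := by
    rw [ofComplex_d_1_0]
    exact (exact_d_f _).moduleCat_range_eq_ker
  have hπ : Surjective (Projective.π X).hom := (ModuleCat.epi_iff_surjective _).1 inferInstance
  have : Module.Projective A ((ofComplex X).X 0) :=
    (IsProjective.iff_projective _).2 (inferInstanceAs (Projective ((ofComplex X).X 0)))
  rw [ext_one_subsingleton_iff_ofComplex, surjective_comp_subtype_ker_iff_of_exact h₂₁ h₁₀]
  exact ⟨surjective_comp_subtype_ker_of_projective hπ hp,
    surjective_comp_subtype_ker_of_projective hp hπ⟩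

end ExtOne

theorem stmt16_general (k : Type u) [Field k] (A : Type u) [Ring A] [Algebra k A]
    (I : Ideal A)
    (B : Type u) [Ring B] (π : A →+* B) (hπ : Function.Surjective π)
    (hker : RingHom.ker π = I) (hB : Module.Injective B B)
    (hext : Subsingleton
      (↥(((Ext k (ModuleCat.{u} A) 1).obj
          (Opposite.op (ModuleCat.of A (A ⧸ I)))).obj (ModuleCat.of A (A ⧸ I))))) :
    ∀ (U : ModuleCat.{u} A), Module.Finite A U → (∀ a ∈ I, ∀ u : U, a • u = 0) →
      Subsingleton
        (↥(((Ext k (ModuleCat.{u} A) 1).obj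
            (Opposite.op U)).obj (ModuleCat.of A (A ⧸ I)))) := by
  subst hker
  let _ : Module A B := π.toModule
  intro U _ hU
  obtain ⟨n, p, hp⟩ := Module.Finite.exists_fin' A U
  have hI := (ext_one_subsingleton_iff_surjective k (Submodule.mkQ_surjective _)).1 hext
  rw [Submodule.ker_mkQ] at hI
  refine (ext_one_subsingleton_iff_surjective k hp).2 fun h => ?_
  have hpi := Submodule.pi_le_ker_of_forall_smul_eq_zero hU p
  obtain ⟨g₀, hg₀⟩ := surjective_comp_subtype_pi hI (h ∘ₗ Submodule.inclusion hpi)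
  let ε : (A ⧸ RingHom.ker π) ≃ₗ[A] B :=
    { RingHom.quotientKerEquivOfSurjective hπ with
      map_smul' := fun a x => Submodule.Quotient.induction_on _ x fun y => map_mul π a y }
  obtain ⟨g₁, hg₁⟩ := exists_comp_subtype_eq_of_forall_map_eq_zero (N := B) hπ (fun _ _ => rfl)
    (ker p) (ε.toLinearMap ∘ₗ (h - g₀ ∘ₗ (ker p).subtype)) fun v hv => by
      have hv' : g₀ v = h v := LinearMap.congr_fun hg₀ ⟨v, fun i _ => hv i⟩
      simp [hv']
  refine ⟨g₀ + ε.symm.toLinearMap ∘ₗ g₁, LinearMap.ext fun x => ?_⟩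
  have hx : g₁ x = ε (h x - g₀ x) := LinearMap.congr_fun hg₁ x
  simp [hx]

/-- Let `A` be a finite-dimensional algebra over a field `k`, and `I` a
nonzero proper two-sided ideal such that the quotient algebra `A/I` (encoded by a
surjective ring homomorphism `π : A → B` with kernel `I`) is selfinjective.  If
`Ext¹_A(A/I, A/I) = 0`, then `Ext¹_A(U, A/I) = 0` for every finitely generated
`A/I`-module `U` (i.e. every finitely generated `A`-module annihilated by `I`). -/
theorem stmt16 (k : Type u) [Field k] (A : Type u) [Ring A] [Algebra k A]
    [FiniteDimensional k A]
    (I : Ideal A) (hItwoSided : ∀ a ∈ I, ∀ b : A, a * b ∈ I)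
    (hInezero : I ≠ ⊥) (hIproper : I ≠ ⊤)
    (B : Type u) [Ring B] (π : A →+* B) (hπ : Function.Surjective π)
    (hker : RingHom.ker π = I) (hB : Module.Injective B B)
    (hext : Subsingleton
      (↥(((Ext k (ModuleCat.{u} A) 1).obj
          (Opposite.op (ModuleCat.of A (A ⧸ I)))).obj (ModuleCat.of A (A ⧸ I))))) :
    ∀ (U : ModuleCat.{u} A), Module.Finite A U → (∀ a ∈ I, ∀ u : U, a • u = 0) →
      Subsingleton
        (↥(((Ext k (ModuleCat.{u} A) 1).obj
            (Opposite.op U)).obj (ModuleCat.of A (A ⧸ I)))) :=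
  stmt16_general k A I B π hπ hker hB hext
end

section
/- Let C be a triangulated category with shift Σ and let D be a full additive abelian subcategory of C such that every short exact sequence in D can be completed to an exact triangle in C (a distinguished abelian subcategory). Then for every short exact sequence 0 → X →f Y →g Z → 0 in D, the morphism h : Z → Σ(X) completing (f,g) to an exact triangle X → Y → Z → Σ(X) in C is unique. -/
universe v u v' u'

open CategoryTheory Category Limits Pretriangulated

/-!
Completing `(𝟙, 𝟙)` to a morphism between the two distinguished triangles gives an endomorphism
`c` of `Z` with `g ≫ c = g` and `h = c ≫ h'`. Since `ι` is full, `c = ι.map d` with `S.g ≫ d = S.g`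
by faithfulness, and `S.g` is an epimorphism in `D`, so `d = 𝟙` and hence `h = h'`.
-/

namespace CategoryTheory.Pretriangulated

variable {C : Type u} [Category.{v} C] [HasZeroObject C] [HasShift C ℤ] [Preadditive C]
  [∀ n : ℤ, (shiftFunctor C n).Additive] [Pretriangulated C]

lemma exists_endo_comp_eq_of_distTriang {X Y Z : C} {f : X ⟶ Y} {g : Y ⟶ Z}
    {h h' : Z ⟶ X⟦(1 : ℤ)⟧} (hh : Triangle.mk f g h ∈ distTriang C)
    (hh' : Triangle.mk f g h' ∈ distTriang C) :
    ∃ c : Z ⟶ Z, g ≫ c = g ∧ h = c ≫ h' := by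
  obtain ⟨c, hc₂, hc₃⟩ := complete_distinguished_triangle_morphism _ _ hh hh' (𝟙 X) (𝟙 Y)
    ((comp_id f).trans (id_comp f).symm)
  -- restate with the `Triangle.mk` projections unfolded, which `rw` cannot see through
  have hc₂ : g ≫ c = 𝟙 Y ≫ g := hc₂
  have hc₃ : h ≫ (𝟙 X)⟦(1 : ℤ)⟧' = c ≫ h' := hc₃
  rw [id_comp] at hc₂
  rw [Functor.map_id, comp_id] at hc₃
  exact ⟨c, hc₂, hc₃⟩

lemma eq_of_distTriang_of_comp_eq_self {X Y Z : C} {f : X ⟶ Y} {g : Y ⟶ Z}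
    {h h' : Z ⟶ X⟦(1 : ℤ)⟧} (hh : Triangle.mk f g h ∈ distTriang C)
    (hh' : Triangle.mk f g h' ∈ distTriang C) (hg : ∀ c : Z ⟶ Z, g ≫ c = g → c = 𝟙 Z) :
    h = h' := by
  obtain ⟨c, hgc, rfl⟩ := exists_endo_comp_eq_of_distTriang hh hh'
  rw [hg c hgc, id_comp]

end CategoryTheory.Pretriangulated

lemma CategoryTheory.Functor.eq_id_of_map_comp_eq_map {D : Type u'} [Category.{v'} D]
    {C : Type u} [Category.{v} C] (ι : D ⥤ C) [ι.Full] [ι.Faithful] {Y Z : D} (g : Y ⟶ Z) [Epi g]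
    (c : ι.obj Z ⟶ ι.obj Z) (hc : ι.map g ≫ c = ι.map g) : c = 𝟙 _ := by
  obtain ⟨d, rfl⟩ := ι.map_surjective c
  have hgd : g ≫ d = g := ι.map_injective (by rwa [ι.map_comp])
  rw [(cancel_epi g).1 (hgd.trans (comp_id g).symm), ι.map_id]

/-- Let `C` be a triangulated category with shift `Σ` and `D` a distinguished
abelian subcategory of `C` (encoded as a fully faithful additive functor `ι : D ⥤ C` from
an abelian category such that every short exact sequence in `D` can be completed to a
distinguished triangle in `C`).  Then for every short exact sequence
`0 → X → Y → Z → 0` in `D`, the morphism `h : Z → Σ X` completing it to a distinguished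
triangle in `C` is unique. -/
theorem stmt17 {C : Type u} [Category.{v} C] [HasZeroObject C] [HasShift C ℤ]
    [Preadditive C] [∀ n : ℤ, (CategoryTheory.shiftFunctor C n).Additive] [Pretriangulated C]
    {D : Type u'} [Category.{v'} D] [Abelian D]
    (ι : D ⥤ C) [ι.Full] [ι.Faithful] [ι.Additive]
    (hdist : ∀ S : ShortComplex D, S.ShortExact →
      ∃ h : ι.obj S.X₃ ⟶ (ι.obj S.X₁)⟦(1 : ℤ)⟧,
        Triangle.mk (ι.map S.f) (ι.map S.g) h ∈ distTriang C)
    (S : ShortComplex D) (hS : S.ShortExact)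
    (h h' : ι.obj S.X₃ ⟶ (ι.obj S.X₁)⟦(1 : ℤ)⟧)
    (hh : Triangle.mk (ι.map S.f) (ι.map S.g) h ∈ distTriang C)
    (hh' : Triangle.mk (ι.map S.f) (ι.map S.g) h' ∈ distTriang C) :
    h = h' :=
  have := hS.epi_g
  eq_of_distTriang_of_comp_eq_self hh hh' (ι.eq_id_of_map_comp_eq_map S.g)
end

section
/- Let C be a triangulated category with shift Σ and D a distinguished abelian subcategory of C. If W is an object of D such that Σ(W) also belongs to D, then W is an injective object of the abelian category D and Σ(W) is a projective object of D. -/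
universe v u v' u'

open CategoryTheory Category Limits Pretriangulated

/-!
Complete a monomorphism `f : X ⟶ Y` (resp. an epimorphism `g : Y ⟶ Z`) of `D` to a short exact
sequence and then to a distinguished triangle `X → Y → Z → Σ X`. For every object `A` of `D`, the
long exact `Hom`-sequences make precomposition with `Σ f` surjective onto `Hom(Σ X, A)` and
composition with `g` surjective onto `Hom(Σ A, Z)`: the obstructions lie in `Hom(Z, A)` and in
`Hom(Σ A, Σ X) ≅ Hom(A, X)`, where they vanish because they are killed by the epimorphism
`Y ⟶ Z`, resp. the monomorphism `X ⟶ Y`, of `D`. For `A = W'` with `ι W' ≅ Σ (ι W)`, full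
faithfulness of `ι` and `Σ` turns these into the extension property of `W` and the lifting
property of `W'`.
-/

namespace CategoryTheory

lemma ShortComplex.shortExact_of_mono_f_of_isCokernel {D : Type*} [Category D] [Abelian D]
    (S : ShortComplex D) [Mono S.f] (hS : IsColimit (CokernelCofork.ofπ S.g S.zero)) :
    S.ShortExact :=
  have : Epi S.g := ⟨fun _ _ h => Cofork.IsColimit.hom_ext hS h⟩
  .mk' (S.exact_of_g_is_cokernel hS) inferInstance inferInstance

lemma ShortComplex.shortExact_of_epi_g_of_isKernel {D : Type*} [Category D] [Abelian D]
    (S : ShortComplex D) [Epi S.g] (hS : IsLimit (KernelFork.ofι S.f S.zero)) :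
    S.ShortExact :=
  have : Mono S.f := ⟨fun _ _ h => Fork.IsLimit.hom_ext hS h⟩
  .mk' (S.exact_of_f_is_kernel hS) inferInstance inferInstance

namespace Functor

variable {C : Type*} [Category C] {D : Type*} [Category D] [HasZeroMorphisms C]
  [HasZeroMorphisms D] (F : D ⥤ C) [F.Full] [F.Faithful] [F.PreservesZeroMorphisms]

lemma eq_zero_of_map_epi_comp_eq_zero {X Y A : D} (e : X ⟶ Y) [Epi e] {φ : F.obj Y ⟶ F.obj A}
    (h : F.map e ≫ φ = 0) : φ = 0 := by
  obtain ⟨ψ, rfl⟩ := F.map_surjective φ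
  have : e ≫ ψ = e ≫ 0 := F.map_injective (by simpa using h)
  rw [cancel_epi e |>.1 this, F.map_zero]

lemma eq_zero_of_comp_map_mono_eq_zero {X Y A : D} (m : X ⟶ Y) [Mono m] {φ : F.obj A ⟶ F.obj X}
    (h : φ ≫ F.map m = 0) : φ = 0 := by
  obtain ⟨ψ, rfl⟩ := F.map_surjective φ
  have : ψ ≫ m = 0 ≫ m := F.map_injective (by simpa using h)
  rw [cancel_mono m |>.1 this, F.map_zero]

end Functor

namespace Pretriangulated

variable {C : Type u} [Category.{v} C] [HasZeroObject C] [HasShift C ℤ]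
  [Preadditive C] [∀ n : ℤ, (shiftFunctor C n).Additive] [Pretriangulated C]
  {D : Type u'} [Category.{v'} D] [HasZeroMorphisms D]
  (ι : D ⥤ C) [ι.Full] [ι.Faithful] [ι.PreservesZeroMorphisms]
  {S : ShortComplex D} (hS : S.ShortExact) {h : ι.obj S.X₃ ⟶ (ι.obj S.X₁)⟦(1 : ℤ)⟧}
  (hT : Triangle.mk (ι.map S.f) (ι.map S.g) h ∈ distTriang C)
include hS hT

lemma exists_shift_map_f_comp_eq (A : D) (φ : (ι.obj S.X₁)⟦(1 : ℤ)⟧ ⟶ ι.obj A) :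
    ∃ χ : (ι.obj S.X₂)⟦(1 : ℤ)⟧ ⟶ ι.obj A, (ι.map S.f)⟦(1 : ℤ)⟧' ≫ χ = φ := by
  have : Epi S.g := hS.epi_g
  have hgh : ι.map S.g ≫ h = 0 := comp_distTriang_mor_zero₂₃ _ hT
  have hφ : h ≫ φ = 0 :=
    ι.eq_zero_of_map_epi_comp_eq_zero S.g (by rw [reassoc_of% hgh, zero_comp])
  obtain ⟨χ, hχ⟩ : ∃ χ : (ι.obj S.X₂)⟦(1 : ℤ)⟧ ⟶ ι.obj A, φ = (-(ι.map S.f)⟦(1 : ℤ)⟧') ≫ χ :=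
    Triangle.yoneda_exact₃ _ (rot_of_distTriang _ hT) φ hφ
  exact ⟨-χ, by rw [hχ, Preadditive.neg_comp, Preadditive.comp_neg]⟩

lemma exists_comp_map_g_eq (A : D) (φ : (ι.obj A)⟦(1 : ℤ)⟧ ⟶ ι.obj S.X₃) :
    ∃ χ : (ι.obj A)⟦(1 : ℤ)⟧ ⟶ ι.obj S.X₂, χ ≫ ι.map S.g = φ := by
  have : Mono S.f := hS.mono_f
  have hhf : h ≫ (ι.map S.f)⟦(1 : ℤ)⟧' = 0 := comp_distTriang_mor_zero₃₁ _ hT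
  have hφ : φ ≫ h = 0 :=
    (ι ⋙ shiftFunctor C (1 : ℤ)).eq_zero_of_comp_map_mono_eq_zero S.f
      (by rw [assoc]; exact (φ ≫= hhf).trans comp_zero)
  obtain ⟨χ, hχ⟩ := Triangle.coyoneda_exact₃ _ hT φ hφ
  exact ⟨χ, hχ.symm⟩

end Pretriangulated

end CategoryTheory

/-- Let `C` be a triangulated category with shift `Σ` and `D` a distinguished
abelian subcategory of `C` (encoded as a fully faithful additive functor `ι : D ⥤ C` from
an abelian category such that every short exact sequence in `D` can be completed to a
distinguished triangle in `C`).  If `W` is an object of `D` such that `Σ(ι W)` also belongs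
to `D` (i.e. there is `W'` in `D` with `ι W' ≅ (ι W)⟦1⟧`), then `W` is an injective object
of `D` and `W'` is a projective object of `D`. -/
theorem stmt18 {C : Type u} [Category.{v} C] [HasZeroObject C] [HasShift C ℤ]
    [Preadditive C] [∀ n : ℤ, (CategoryTheory.shiftFunctor C n).Additive] [Pretriangulated C]
    {D : Type u'} [Category.{v'} D] [Abelian D]
    (ι : D ⥤ C) [ι.Full] [ι.Faithful] [ι.Additive]
    (hdist : ∀ S : ShortComplex D, S.ShortExact →
      ∃ h : ι.obj S.X₃ ⟶ (ι.obj S.X₁)⟦(1 : ℤ)⟧,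
        Triangle.mk (ι.map S.f) (ι.map S.g) h ∈ distTriang C)
    (W W' : D) (eW : ι.obj W' ≅ (ι.obj W)⟦(1 : ℤ)⟧) :
    CategoryTheory.Injective W ∧ CategoryTheory.Projective W' := by
  refine ⟨⟨fun {X Y} g f _ => ?_⟩, ⟨fun {Y Z} p g _ => ?_⟩⟩
  · have hS := (ShortComplex.mk f (cokernel.π f) (cokernel.condition f)
      ).shortExact_of_mono_f_of_isCokernel (cokernelIsCokernel f)
    obtain ⟨h, hT⟩ := hdist _ hS
    obtain ⟨χ, hχ⟩ := exists_shift_map_f_comp_eq ι hS hT W' ((ι.map g)⟦(1 : ℤ)⟧' ≫ eW.inv)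
    refine ⟨(ι ⋙ shiftFunctor C (1 : ℤ)).preimage (χ ≫ eW.hom), ?_⟩
    apply (ι ⋙ shiftFunctor C (1 : ℤ)).map_injective
    simp only [Functor.map_comp, Functor.map_preimage]
    simpa using hχ =≫ eW.hom
  · have hS := (ShortComplex.mk (kernel.ι g) g (kernel.condition g)
      ).shortExact_of_epi_g_of_isKernel (kernelIsKernel g)
    obtain ⟨h, hT⟩ := hdist _ hS
    obtain ⟨χ, hχ⟩ := exists_comp_map_g_eq ι hS hT W (eW.inv ≫ ι.map p)
    refine ⟨ι.preimage (eW.hom ≫ χ), ι.map_injective ?_⟩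
    simpa using eW.hom ≫= hχ
end

section
/- Let C be a triangulated category and D a distinguished abelian subcategory of C. If the inclusion functor D → C admits a left adjoint or a right adjoint (as an additive functor), then the abelian category D is split, i.e., every monomorphism and every epimorphism in D is split. -/
universe v u v' u'

open CategoryTheory Category Limits Pretriangulated

/-!
A triangulated category is split: a distinguished triangle `X ⟶ Y ⟶ Z ⟶ X⟦1⟧` has a zero third
morphism as soon as its first one is a monomorphism, or its second one an epimorphism, and then
both split. An adjoint inclusion `D ⥤ C` preserves monomorphisms (right adjoint) or epimorphisms
(left adjoint), so the triangle completing the image of any short exact sequence of `D` is of this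
kind. Its splittings lie in the image of `ι`, and full faithfulness pulls them back to `D`.
-/

namespace CategoryTheory

lemma Pretriangulated.Triangle.mono₁_iff_epi₂ {C : Type u} [Category.{v} C] [HasZeroObject C]
    [HasShift C ℤ] [Preadditive C] [∀ n : ℤ, (CategoryTheory.shiftFunctor C n).Additive]
    [Pretriangulated C]
    (T : Triangle C) (hT : T ∈ distTriang C) : Mono T.mor₁ ↔ Epi T.mor₂ :=
  (T.mor₃_eq_zero_iff_mono₁ hT).symm.trans (T.mor₃_eq_zero_iff_epi₂ hT)

lemma Functor.isSplitMono_of_mono_map {C : Type u} [Category.{v} C] [SplitMonoCategory C]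
    {D : Type u'} [Category.{v'} D] (ι : D ⥤ C) [ι.Full] [ι.Faithful]
    {X Y : D} (f : X ⟶ Y) [Mono (ι.map f)] : IsSplitMono f :=
  (ι.isSplitMono_iff f).1 (isSplitMono_of_mono _)

lemma Functor.isSplitEpi_of_epi_map {C : Type u} [Category.{v} C] [SplitEpiCategory C]
    {D : Type u'} [Category.{v'} D] (ι : D ⥤ C) [ι.Full] [ι.Faithful]
    {X Y : D} (f : X ⟶ Y) [Epi (ι.map f)] : IsSplitEpi f :=
  (ι.isSplitEpi_iff f).1 (isSplitEpi_of_epi _)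

lemma ShortComplex.ShortExact.isSplitMono_f_and_isSplitEpi_g {C : Type u} [Category.{v} C]
    [HasZeroObject C] [HasShift C ℤ] [Preadditive C] [∀ n : ℤ, (shiftFunctor C n).Additive]
    [Pretriangulated C] {D : Type u'} [Category.{v'} D] [Abelian D]
    (ι : D ⥤ C) [ι.Full] [ι.Faithful]
    (hdist : ∀ S : ShortComplex D, S.ShortExact →
      ∃ h : ι.obj S.X₃ ⟶ (ι.obj S.X₁)⟦(1 : ℤ)⟧,
        Triangle.mk (ι.map S.f) (ι.map S.g) h ∈ distTriang C)
    {S : ShortComplex D} (hS : S.ShortExact) (hι : Mono (ι.map S.f) ∨ Epi (ι.map S.g)) :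
    IsSplitMono S.f ∧ IsSplitEpi S.g := by
  obtain ⟨h, hT⟩ := hdist S hS
  have hiff : Mono (ι.map S.f) ↔ Epi (ι.map S.g) := Triangle.mono₁_iff_epi₂ _ hT
  have : Mono (ι.map S.f) := hι.elim id hiff.2
  have : Epi (ι.map S.g) := hiff.1 this
  exact ⟨ι.isSplitMono_of_mono_map S.f, ι.isSplitEpi_of_epi_map S.g⟩

end CategoryTheory

/-- Let `C` be a triangulated category and `D` a distinguished abelian
subcategory of `C` (encoded as a fully faithful additive functor `ι : D ⥤ C` from an
abelian category such that every short exact sequence in `D` can be completed to a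
distinguished triangle in `C`).  If the inclusion `ι` admits a left adjoint (i.e. `ι` is a
right adjoint) or a right adjoint (i.e. `ι` is a left adjoint), then the abelian category
`D` is split: every monomorphism and every epimorphism in `D` is split. -/
theorem stmt19 {C : Type u} [Category.{v} C] [HasZeroObject C] [HasShift C ℤ]
    [Preadditive C] [∀ n : ℤ, (CategoryTheory.shiftFunctor C n).Additive] [Pretriangulated C]
    {D : Type u'} [Category.{v'} D] [Abelian D]
    (ι : D ⥤ C) [ι.Full] [ι.Faithful] [ι.Additive]
    (hdist : ∀ S : ShortComplex D, S.ShortExact →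
      ∃ h : ι.obj S.X₃ ⟶ (ι.obj S.X₁)⟦(1 : ℤ)⟧,
        Triangle.mk (ι.map S.f) (ι.map S.g) h ∈ distTriang C)
    (hadj : ι.IsRightAdjoint ∨ ι.IsLeftAdjoint) :
    (∀ {X Y : D} (f : X ⟶ Y), Mono f → IsSplitMono f) ∧
    (∀ {X Y : D} (f : X ⟶ Y), Epi f → IsSplitEpi f) := by
  have hsplit : ∀ S : ShortComplex D, S.ShortExact → IsSplitMono S.f ∧ IsSplitEpi S.g :=
    fun S hS => hS.isSplitMono_f_and_isSplitEpi_g ι hdist <| by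
      have := hS.mono_f
      have := hS.epi_g
      rcases hadj with _ | _
      exacts [.inl (ι.map_mono S.f), .inr (ι.map_epi S.g)]
  refine ⟨fun f _ => ?_, fun f _ => ?_⟩
  · exact (hsplit (ShortComplex.mk _ _ (cokernel.condition f))
      { exact := ShortComplex.exact_cokernel f }).1
  · exact (hsplit (ShortComplex.mk _ _ (kernel.condition f))
      { exact := ShortComplex.exact_kernel f }).2
end
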